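/- Let p_0, p_1, …, p_{2n−1} be 2n distinct points on a common circle in counterclockwise order and let μ > 0. Then there exists a perfect non-crossing matching of the points in which every edge has length at least μ if and only if there is no j such that all n boundary edges {p_i, p_{i+1}} for i = j, j+1, …, j+n−1 (indices modulo 2n) have length strictly less than μ. -/

import Mathlib

noncomputable section

/-- The Euclidean plane. -/
abbrev Pt : Type := EuclideanSpace ℝ (Fin 2)

/-- The determinant of two plane vectors (twice the signed area). -/
def det2 (u v : Pt) : ℝ := u 0 * v 1 - u 1 * v 0

/-- The points `p 0, p 1, …, p (N-1)` (indices in `ZMod N`) are distinct, lie on a common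
circle, and are labeled in counterclockwise order: every triple of points with increasing
indices is positively (counterclockwise) oriented. -/
def OnCircleCCW (N : ℕ) (p : ZMod N → Pt) : Prop :=
  (∃ c : Pt, ∃ r : ℝ, 0 < r ∧ ∀ i, dist (p i) c = r) ∧
  Function.Injective p ∧
  (∀ i j k : ZMod N, i.val < j.val → j.val < k.val →
    0 < det2 (p j - p i) (p k - p i))

/-- `σ` encodes a perfect non-crossing matching of the points `p 0, …, p (N-1)`: it is a
fixed-point free involution of the indices, and the closed segments induced by two distinct
edges are disjoint. -/
def IsNCM (N : ℕ) (p : ZMod N → Pt) (σ : ZMod N → ZMod N) : Prop :=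
  (∀ i, σ (σ i) = i) ∧ (∀ i, σ i ≠ i) ∧
  (∀ i j : ZMod N, j ≠ i → j ≠ σ i →
    segment ℝ (p i) (p (σ i)) ∩ segment ℝ (p j) (p (σ j)) = ∅)

/-!
If the `n` boundary edges starting at `p j` are all shorter than `μ`, the `n + 1` points
`p j, …, p (j + n)` cannot all be matched to the `n - 1` points outside this window, so some edge
joins two of them; by non-crossingness an innermost such edge joins neighbours, and it is one of
the short boundary edges.

Conversely, cut the circle after a long boundary edge and colour each point by the number of long
boundary edges preceding it. Every `n` consecutive boundary edges contain a long one, so no colour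
occurs more than `n` times, and repeatedly matching two neighbours of different colours, one of
them of a most frequent colour, gives a non-crossing matching whose edges all join different
colours. Such an edge `p x p y` separates a long boundary edge between `x` and `y` from the long
edge at the cut, and a chord of a circle is at least as long as the shorter of two chords on
either side of it: the one on the far side from the centre lies in the disc with diameter the
chord.
-/

open Finset

lemma det2_swap (u v : Pt) : det2 u v = -det2 v u := by unfold det2; ring

lemma det2_sub_cyclic (u v w : Pt) : det2 (v - u) (w - u) = det2 (w - v) (u - v) := by
  simp only [det2, PiLp.sub_apply]; ring

@[simp] lemma det2_self (u : Pt) : det2 u u = 0 := by unfold det2; ring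

@[simp] lemma det2_zero_right (u : Pt) : det2 u 0 = 0 := by simp [det2]

lemma det2_smul_add_smul_sub (u A C D : Pt) {a b : ℝ} (hab : a + b = 1) :
    det2 u (a • C + b • D - A) = a * det2 u (C - A) + b * det2 u (D - A) := by
  simp only [det2, PiLp.add_apply, PiLp.sub_apply, PiLp.smul_apply, smul_eq_mul]
  linear_combination (u 0 * A 1 - u 1 * A 0) * hab

lemma segment_inter_segment_eq_empty_of_det2_mul_pos {A B C D : Pt}
    (h : 0 < det2 (B - A) (C - A) * det2 (B - A) (D - A)) :
    segment ℝ A B ∩ segment ℝ C D = ∅ := by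
  rw [Set.eq_empty_iff_forall_notMem]
  rintro X ⟨⟨a, b, -, -, hab, rfl⟩, ⟨c, d, hc, hd, hcd, hX⟩⟩
  have h0 : det2 (B - A) (a • A + b • B - A) = 0 := by
    simp [det2_smul_add_smul_sub _ _ _ _ hab]
  rw [← hX, det2_smul_add_smul_sub _ _ _ _ hcd] at h0
  have key : (c + d) * (det2 (B - A) (C - A) * det2 (B - A) (D - A)) =
      -(c * det2 (B - A) (C - A) ^ 2 + d * det2 (B - A) (D - A) ^ 2) := by
    linear_combination (det2 (B - A) (C - A) + det2 (B - A) (D - A)) * h0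
  rw [hcd, one_mul] at key
  linarith [mul_nonneg hc (sq_nonneg (det2 (B - A) (C - A))),
    mul_nonneg hd (sq_nonneg (det2 (B - A) (D - A)))]

lemma segment_inter_segment_nonempty_of_det2_pos {A B C D : Pt}
    (hABC : 0 < det2 (B - A) (C - A)) (hABD : 0 < det2 (B - A) (D - A))
    (hACD : 0 < det2 (C - A) (D - A)) (hBCD : 0 < det2 (C - B) (D - B)) :
    (segment ℝ A C ∩ segment ℝ B D).Nonempty := by
  set S := det2 (C - B) (D - B) + det2 (B - A) (D - A)
  have hS : S = det2 (C - A) (D - A) + det2 (B - A) (C - A) := by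
    simp only [S, det2, PiLp.sub_apply]; ring
  have hS0 : S ≠ 0 := by positivity
  -- the Plücker relation among four points of the plane
  have hplucker : det2 (C - B) (D - B) • A + det2 (B - A) (D - A) • C =
      det2 (C - A) (D - A) • B + det2 (B - A) (C - A) • D := by
    ext i; fin_cases i <;> simp [det2] <;> ring
  refine ⟨S⁻¹ • (det2 (C - B) (D - B) • A + det2 (B - A) (D - A) • C), ?_, ?_⟩
  · refine ⟨S⁻¹ * det2 (C - B) (D - B), S⁻¹ * det2 (B - A) (D - A), by positivity,
      by positivity, by rw [← mul_add, inv_mul_cancel₀ hS0], by simp only [smul_add, smul_smul]⟩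
  · refine ⟨S⁻¹ * det2 (C - A) (D - A), S⁻¹ * det2 (B - A) (C - A), by positivity,
      by positivity, by rw [← mul_add, ← hS, inv_mul_cancel₀ hS0], ?_⟩
    rw [hplucker, smul_add, smul_smul, smul_smul]

lemma dist_sq_eq (u v : Pt) : dist u v ^ 2 = (u 0 - v 0) ^ 2 + (u 1 - v 1) ^ 2 := by
  rw [EuclideanSpace.dist_eq, Fin.sum_univ_two, Real.sq_sqrt (by positivity)]
  simp [Real.dist_eq, sq_abs]

-- `⟪X - A, X - B⟫ ≤ 0` says that `X` lies in the disc with diameter `AB`.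
lemma inner_sub_sub_mul_eq_det2_mul_det2 {O A B X : Pt} {r : ℝ} (hA : dist A O = r)
    (hB : dist B O = r) (hX : dist X O = r) :
    inner ℝ (X - A) (X - B) * inner ℝ (B - A) (B - A) =
      2 * det2 (B - A) (O - A) * det2 (B - A) (X - A) := by
  have hA' := dist_sq_eq A O
  have hB' := dist_sq_eq B O
  have hX' := dist_sq_eq X O
  rw [hA] at hA'
  rw [hB] at hB'
  rw [hX] at hX'
  simp only [PiLp.inner_apply, Fin.sum_univ_two, det2, PiLp.sub_apply, RCLike.inner_apply,
    conj_trivial]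
  set ax := (A 0 - O 0) * (X 0 - O 0) + (A 1 - O 1) * (X 1 - O 1)
  set bx := (B 0 - O 0) * (X 0 - O 0) + (B 1 - O 1) * (X 1 - O 1)
  set ab := (A 0 - O 0) * (B 0 - O 0) + (A 1 - O 1) * (B 1 - O 1)
  set bb := (B 0 - O 0) ^ 2 + (B 1 - O 1) ^ 2
  set xx := (X 0 - O 0) ^ 2 + (X 1 - O 1) ^ 2
  linear_combination (2 * ab - 2 * bb) * hX' - (xx - 2 * bb - ax + bx + ab) * hA'
    - (ab + ax - bx - xx) * hB'

lemma inner_sub_sub_nonpos_of_det2_mul_nonpos {O A B X : Pt} {r : ℝ} (hAB : A ≠ B)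
    (hA : dist A O = r) (hB : dist B O = r) (hX : dist X O = r)
    (h : det2 (B - A) (O - A) * det2 (B - A) (X - A) ≤ 0) :
    inner ℝ (X - A) (X - B) ≤ 0 := by
  have hpos : 0 < inner ℝ (B - A) (B - A) := real_inner_self_pos.2 (sub_ne_zero.2 hAB.symm)
  have key := inner_sub_sub_mul_eq_det2_mul_det2 hA hB hX
  nlinarith

lemma dist_le_of_inner_sub_sub_nonpos {V : Type*} [NormedAddCommGroup V] [InnerProductSpace ℝ V]
    {A B C D : V} (hC : inner ℝ (C - A) (C - B) ≤ 0) (hD : inner ℝ (D - A) (D - B) ≤ 0) :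
    dist C D ≤ dist A B := by
  have key : ∀ X : V, inner ℝ (X - A) (X - B) ≤ 0 → ‖(X - A) + (X - B)‖ ≤ dist A B := by
    intro X hX
    have hsub : (X - A) - (X - B) = B - A := by abel
    have h1 := norm_add_sq_real (X - A) (X - B)
    have h2 := norm_sub_sq_real (X - A) (X - B)
    rw [hsub, ← dist_eq_norm, dist_comm] at h2
    exact (sq_le_sq₀ (norm_nonneg _) dist_nonneg).1 (by linarith)
  have h2CD : (C - A + (C - B)) - (D - A + (D - B)) = (2 : ℝ) • (C - D) := by module
  have := norm_sub_le (C - A + (C - B)) (D - A + (D - B))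
  rw [h2CD, norm_smul, Real.norm_two, ← dist_eq_norm] at this
  linarith [key C hC, key D hD]

theorem min_dist_le_dist_of_det2_separates {O A B C D E F : Pt} {r : ℝ} (hAB : A ≠ B)
    (hA : dist A O = r) (hB : dist B O = r) (hC : dist C O = r) (hD : dist D O = r)
    (hE : dist E O = r) (hF : dist F O = r)
    (hCs : det2 (B - A) (C - A) ≤ 0) (hDs : det2 (B - A) (D - A) ≤ 0)
    (hEs : 0 ≤ det2 (B - A) (E - A)) (hFs : 0 ≤ det2 (B - A) (F - A)) :
    min (dist C D) (dist E F) ≤ dist A B := by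
  rcases le_total 0 (det2 (B - A) (O - A)) with hO | hO
  · exact (min_le_left _ _).trans <| dist_le_of_inner_sub_sub_nonpos
      (inner_sub_sub_nonpos_of_det2_mul_nonpos hAB hA hB hC (mul_nonpos_of_nonneg_of_nonpos hO hCs))
      (inner_sub_sub_nonpos_of_det2_mul_nonpos hAB hA hB hD (mul_nonpos_of_nonneg_of_nonpos hO hDs))
  · exact (min_le_right _ _).trans <| dist_le_of_inner_sub_sub_nonpos
      (inner_sub_sub_nonpos_of_det2_mul_nonpos hAB hA hB hE (mul_nonpos_of_nonpos_of_nonneg hO hEs))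
      (inner_sub_sub_nonpos_of_det2_mul_nonpos hAB hA hB hF (mul_nonpos_of_nonpos_of_nonneg hO hFs))

def IsCCWChain (N : ℕ) (q : ℕ → Pt) : Prop :=
  ∀ ⦃x y z : ℕ⦄, x < y → y < z → z < N → 0 < det2 (q y - q x) (q z - q x)

namespace IsCCWChain

variable {N : ℕ} {q : ℕ → Pt}

lemma det2_neg (hq : IsCCWChain N q) {x y z : ℕ} (hxz : x < z) (hzy : z < y) (hy : y < N) :
    det2 (q y - q x) (q z - q x) < 0 := by
  rw [det2_swap, neg_neg_iff_pos]
  exact hq hxz hzy hy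

lemma det2_pos (hq : IsCCWChain N q) {x y z : ℕ} (hxy : x < y) (hy : y < N) (hz : z < N)
    (h : z < x ∨ y < z) : 0 < det2 (q y - q x) (q z - q x) := by
  rcases h with h | h
  · rw [← det2_sub_cyclic]
    exact hq h hxy hy
  · exact hq hxy h hz

lemma det2_nonpos (hq : IsCCWChain N q) {x y z : ℕ} (hxz : x ≤ z) (hzy : z ≤ y) (hy : y < N) :
    det2 (q y - q x) (q z - q x) ≤ 0 := by
  rcases hxz.eq_or_lt with rfl | hxz
  · simp
  rcases hzy.eq_or_lt with rfl | hzy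
  · simp
  exact (hq.det2_neg hxz hzy hy).le

lemma det2_nonneg (hq : IsCCWChain N q) {x y z : ℕ} (hxy : x < y) (hy : y < N) (hz : z < N)
    (h : z ≤ x ∨ y ≤ z) : 0 ≤ det2 (q y - q x) (q z - q x) := by
  rcases h with h | h
  · rcases h.eq_or_lt with rfl | h
    · simp
    exact (hq.det2_pos hxy hy hz (Or.inl h)).le
  · rcases h.eq_or_lt with rfl | h
    · simp
    exact (hq.det2_pos hxy hy hz (Or.inr h)).le

lemma segment_inter_nonempty (hq : IsCCWChain N q) {a b c d : ℕ} (hab : a < b) (hbc : b < c)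
    (hcd : c < d) (hd : d < N) : (segment ℝ (q a) (q c) ∩ segment ℝ (q b) (q d)).Nonempty :=
  segment_inter_segment_nonempty_of_det2_pos (hq hab hbc (hcd.trans hd))
    (hq hab (hbc.trans hcd) hd) (hq (hab.trans hbc) hcd hd) (hq hbc hcd hd)

lemma le_dist (hq : IsCCWChain N q) {O : Pt} {r μ : ℝ} (hO : ∀ x, dist (q x) O = r)
    {x y e : ℕ} (hxy : x < y) (hy : y < N) (hne : q x ≠ q y) (hxe : x ≤ e) (hey : e < y)
    (he : μ ≤ dist (q e) (q (e + 1))) (hwrap : μ ≤ dist (q (N - 1)) (q 0)) :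
    μ ≤ dist (q x) (q y) :=
  (le_min he hwrap).trans <| min_dist_le_dist_of_det2_separates hne (hO x) (hO y) (hO e)
    (hO (e + 1)) (hO (N - 1)) (hO 0) (hq.det2_nonpos hxe hey.le hy)
    (hq.det2_nonpos (by omega) hey hy) (hq.det2_nonneg hxy hy (by omega) (Or.inr (by omega)))
    (hq.det2_nonneg hxy hy (by omega) (Or.inl (Nat.zero_le x)))

end IsCCWChain

lemma val_add_natCast_sub {N : ℕ} (b : ZMod N) {x : ℕ} (hx : x < N) : (b + x - b).val = x := by
  rw [add_sub_cancel_left, ZMod.val_natCast_of_lt hx]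

lemma add_natCast_injOn {N : ℕ} (b : ZMod N) {x y : ℕ} (hx : x < N) (hy : y < N)
    (h : b + (x : ZMod N) = b + y) : x = y := by
  rw [← val_add_natCast_sub b hx, h, val_add_natCast_sub b hy]

lemma exists_lt_add_natCast_eq {N : ℕ} [NeZero N] (b z : ZMod N) : ∃ x < N, b + x = z :=
  ⟨(z - b).val, ZMod.val_lt _, by simp⟩

lemma isCCWChain_rotate {N : ℕ} [NeZero N] {p : ZMod N → Pt}
    (hp : ∀ i j k : ZMod N, i.val < j.val → j.val < k.val → 0 < det2 (p j - p i) (p k - p i))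
    (b : ZMod N) : IsCCWChain N (fun x => p (b + x)) := by
  intro x w y hxw hwy hy
  have hval : ∀ z < N, (b + (z : ZMod N)).val =
      if b.val + z < N then b.val + z else b.val + z - N := by
    intro z hz
    have hzv : (z : ZMod N).val = z := ZMod.val_natCast_of_lt hz
    split_ifs with h
    · rw [ZMod.val_add_of_lt (by omega), hzv]
    · rw [ZMod.val_add_of_le (by omega), hzv]
  set X := b + (x : ZMod N)
  set W := b + (w : ZMod N)
  set Y := b + (y : ZMod N)
  -- adding `b` rotates the increasing triple `x < w < y` cyclically
  have hrot : X.val < W.val ∧ W.val < Y.val ∨ W.val < Y.val ∧ Y.val < X.val ∨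
      Y.val < X.val ∧ X.val < W.val := by
    have := ZMod.val_lt b
    rw [hval x (by omega), hval w (by omega), hval y hy]
    split_ifs <;> omega
  rcases hrot with ⟨h₁, h₂⟩ | ⟨h₁, h₂⟩ | ⟨h₁, h₂⟩
  · exact hp X W Y h₁ h₂
  · rw [det2_sub_cyclic]; exact hp W Y X h₁ h₂
  · rw [← det2_sub_cyclic]; exact hp Y X W h₁ h₂

structure IsNonCrossingMatching {α : Type*} [LinearOrder α] (S : Finset α) (f : α → α) : Prop where
  apply_mem : ∀ x ∈ S, f x ∈ S
  apply_apply : ∀ x ∈ S, f (f x) = x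
  apply_ne : ∀ x ∈ S, f x ≠ x
  not_interleaved : ∀ x ∈ S, ∀ y ∈ S, ¬ (x < y ∧ y < f x ∧ f x < f y)

section Construction

variable {α β : Type*} [LinearOrder α]

lemma Finset.exists_adjacent_iff_not {S : Finset α} (P : α → Prop) {u v : α} (hu : u ∈ S)
    (hv : v ∈ S) (hPu : P u) (hPv : ¬ P v) :
    ∃ a ∈ S, ∃ b ∈ S, a < b ∧ (∀ z ∈ S, ¬ (a < z ∧ z < b)) ∧ (P a ↔ ¬ P b) := by
  classical
  wlog huv : u < v generalizing P u v
  · obtain ⟨a, ha, b, hb, hab, hadj, hP⟩ := this (¬ P ·) hv hu hPv (not_not.2 hPu)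
      (lt_of_le_of_ne (not_lt.1 huv) fun h => hPv (h ▸ hPu))
    exact ⟨a, ha, b, hb, hab, hadj, by tauto⟩
  obtain ⟨b, hbT, hbmin⟩ : ∃ b ∈ {z ∈ S | u < z ∧ ¬ P z}, ∀ z ∈ {z ∈ S | u < z ∧ ¬ P z}, b ≤ z :=
    ⟨_, min'_mem _ ⟨v, by simp [hv, huv, hPv]⟩, fun z hz => min'_le _ z hz⟩
  obtain ⟨hb, hub, hPb⟩ := mem_filter.1 hbT
  obtain ⟨a, haR, hamax⟩ : ∃ a ∈ {z ∈ S | z < b}, ∀ z ∈ {z ∈ S | z < b}, z ≤ a :=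
    ⟨_, max'_mem _ ⟨u, by simp [hu, hub]⟩, fun z hz => le_max' _ z hz⟩
  obtain ⟨ha, hab⟩ := mem_filter.1 haR
  refine ⟨a, ha, b, hb, hab, ?_, fun _ => hPb, fun _ => ?_⟩
  · rintro z hz ⟨haz, hzb⟩
    exact (hamax z (by simp [hz, hzb])).not_gt haz
  · rcases (hamax u (by simp [hu, hub])).eq_or_lt with rfl | hua
    · exact hPu
    by_contra hPa
    exact (hbmin a (by simp [ha, hua, hPa])).not_gt hab

lemma card_filter_erase_erase_le [DecidableEq β] {S : Finset α} {col : α → β} {k : ℕ} {a b : α}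
    (hS : #S = 2 * (k + 1)) (hcls : ∀ c, #{x ∈ S | col x = c} ≤ k + 1)
    (hmax : ∀ c, #{x ∈ S | col x = c} ≤ #{x ∈ S | col x = col a})
    (ha : a ∈ S) (hb : b ∈ S) (hab : col b ≠ col a) (c : β) :
    #{x ∈ (S.erase a).erase b | col x = c} ≤ k := by
  rw [filter_erase, filter_erase]
  have hba : b ≠ a := fun h => hab (h ▸ rfl)
  by_cases hca : c = col a
  · have := card_erase_of_mem (s := {x ∈ S | col x = c}) (mem_filter.2 ⟨ha, hca.symm⟩)
    have := card_erase_le (s := ({x ∈ S | col x = c}).erase a) (a := b)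
    have := hcls c
    omega
  by_cases hcb : c = col b
  · have := card_erase_of_mem (s := ({x ∈ S | col x = c}).erase a)
      (mem_erase.2 ⟨hba, mem_filter.2 ⟨hb, hcb.symm⟩⟩)
    have := card_erase_le (s := {x ∈ S | col x = c}) (a := a)
    have := hcls c
    omega
  -- the classes of `c` and of the largest colour `col a` both avoid `b`
  have hdisj : Disjoint {x ∈ S | col x = c} {x ∈ S | col x = col a} :=
    disjoint_filter.2 fun _ _ h h' => hca (h.symm.trans h')
  have hsub : {x ∈ S | col x = c} ∪ {x ∈ S | col x = col a} ⊆ S.erase b := by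
    intro x hx
    simp only [mem_union, mem_filter] at hx
    exact mem_erase.2 ⟨by rintro rfl; tauto, by tauto⟩
  have := card_le_card hsub
  rw [card_union_of_disjoint hdisj, card_erase_of_mem hb] at this
  have := hmax c
  have := card_erase_le (s := ({x ∈ S | col x = c}).erase a) (a := b)
  have := card_erase_le (s := {x ∈ S | col x = c}) (a := a)
  omega

lemma IsNonCrossingMatching.extend {S : Finset α} {f : α → α} {a b : α}
    (hf : IsNonCrossingMatching ((S.erase a).erase b) f) (ha : a ∈ S) (hb : b ∈ S) (hab : a < b)
    (hadj : ∀ z ∈ S, ¬ (a < z ∧ z < b)) :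
    IsNonCrossingMatching S (fun x => if x = a then b else if x = b then a else f x) := by
  have hmem : ∀ x ∈ S, x ≠ a → x ≠ b → x ∈ (S.erase a).erase b := fun x hx h₁ h₂ =>
    mem_erase.2 ⟨h₂, mem_erase.2 ⟨h₁, hx⟩⟩
  have hfab : ∀ x ∈ (S.erase a).erase b, f x ≠ a ∧ f x ≠ b ∧ f x ∈ S := fun x hx => by
    have := hf.apply_mem x hx
    simp only [mem_erase] at this
    exact ⟨this.2.1, this.1, this.2.2⟩
  have hba : b ≠ a := hab.ne'
  refine ⟨fun x hx => ?_, fun x hx => ?_, fun x hx => ?_, fun x hx y hy => ?_⟩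
  · split_ifs
    exacts [hb, ha, (hfab x (hmem x hx ‹_› ‹_›)).2.2]
  · by_cases hxa : x = a
    · simp [hxa, hba]
    by_cases hxb : x = b
    · simp [hxb, hba]
    obtain ⟨h₁, h₂, -⟩ := hfab x (hmem x hx hxa hxb)
    simp [hxa, hxb, h₁, h₂, hf.apply_apply x (hmem x hx hxa hxb)]
  · split_ifs with hxa hxb
    · exact hxa ▸ hba
    · exact hxb ▸ hba.symm
    · exact hf.apply_ne x (hmem x hx hxa hxb)
  · rintro ⟨hxy, hyfx, hfxfy⟩
    by_cases hxa : x = a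
    · simp only [hxa, if_true] at hyfx hxy
      exact hadj y hy ⟨hxy, hyfx⟩
    by_cases hxb : x = b
    · simp only [hxb, hba, if_true, if_false] at hyfx hxy
      exact lt_asymm hab (hxy.trans hyfx)
    have hx' := hmem x hx hxa hxb
    simp only [hxa, hxb, if_false] at hyfx hfxfy
    by_cases hya : y = a
    · simp only [hya, if_true] at hfxfy hyfx
      exact hadj (f x) (hfab x hx').2.2 ⟨hyfx, hfxfy⟩
    by_cases hyb : y = b
    · simp only [hyb, hba, if_true, if_false] at hfxfy hyfx
      exact lt_asymm hab (hyfx.trans hfxfy)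
    simp only [hya, hyb, if_false] at hfxfy
    exact hf.not_interleaved x hx' y (hmem y hy hya hyb) ⟨hxy, hyfx, hfxfy⟩

theorem exists_isNonCrossingMatching_of_card_filter_le [DecidableEq β] (col : α → β) (k : ℕ)
    (S : Finset α) (hS : #S = 2 * k) (hcls : ∀ c, #{x ∈ S | col x = c} ≤ k) :
    ∃ f, IsNonCrossingMatching S f ∧ ∀ x ∈ S, col (f x) ≠ col x := by
  induction k generalizing S with
  | zero =>
    obtain rfl : S = ∅ := card_eq_zero.1 hS
    exact ⟨id, ⟨by simp, by simp, by simp, by simp⟩, by simp⟩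
  | succ k ih =>
    obtain ⟨u, hu, hmax⟩ := S.exists_max_image (fun x => #{y ∈ S | col y = col x})
      (card_pos.1 (by omega))
    have hmax' : ∀ c, #{x ∈ S | col x = c} ≤ #{x ∈ S | col x = col u} := by
      intro c
      rcases ({x ∈ S | col x = c}).eq_empty_or_nonempty with h | ⟨x, hx⟩
      · simp [h]
      · obtain ⟨hxS, rfl⟩ := mem_filter.1 hx
        exact hmax x hxS
    obtain ⟨v, hv, hvu⟩ : ∃ v ∈ S, col v ≠ col u := by
      by_contra! h
      have := hcls (col u)
      rw [filter_true_of_mem h] at this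
      omega
    obtain ⟨a, ha, b, hb, hab, hadj, hPab⟩ :=
      S.exists_adjacent_iff_not (col · = col u) hu hv rfl hvu
    have hcolab : col a ≠ col b := fun h => by rw [h] at hPab; tauto
    have hS' : #((S.erase a).erase b) = 2 * k := by
      rw [card_erase_of_mem (mem_erase.2 ⟨hab.ne', hb⟩), card_erase_of_mem ha]
      omega
    have hcls' : ∀ c, #{x ∈ (S.erase a).erase b | col x = c} ≤ k := by
      by_cases hau : col a = col u
      · exact card_filter_erase_erase_le hS hcls (hau ▸ hmax') ha hb hcolab.symm
      · have hbu : col b = col u := by tauto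
        rw [erase_right_comm]
        exact card_filter_erase_erase_le hS hcls (hbu ▸ hmax') hb ha hcolab
    obtain ⟨f, hf, hcolf⟩ := ih _ hS' hcls'
    refine ⟨_, hf.extend ha hb hab hadj, fun x hx => ?_⟩
    split_ifs with hxa hxb
    · exact hxa ▸ hcolab.symm
    · exact hxb ▸ hcolab
    · exact hcolf x (mem_erase.2 ⟨hxb, mem_erase.2 ⟨hxa, hx⟩⟩)

end Construction

namespace IsNonCrossingMatching

variable {N : ℕ} {f : ℕ → ℕ}

lemma exists_apply_eq_succ (hf : IsNonCrossingMatching (range N) f) {a : ℕ} (ha : a < N)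
    (hlt : a < f a) : ∃ x, a ≤ x ∧ x + 1 ≤ f a ∧ f x = x + 1 := by
  have hfa : f a < N := mem_range.1 (hf.apply_mem a (mem_range.2 ha))
  rcases (Nat.succ_le_of_lt hlt).eq_or_lt with h | h
  · exact ⟨a, le_rfl, h.le, h.symm⟩
  -- by non-crossingness, `a + 1` is matched inside the pair `(a, f a)`
  have hy : a + 1 ∈ range N := mem_range.2 (by omega)
  have hfy : f (a + 1) ∈ range N := hf.apply_mem _ hy
  have hfyy := hf.apply_ne _ hy
  have hfya : f (a + 1) ≠ a := fun h' => by
    have := hf.apply_apply _ hy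
    rw [h'] at this
    omega
  have hyfy : a + 1 < f (a + 1) := by
    by_contra h'
    refine hf.not_interleaved _ hfy a (mem_range.2 ha) ⟨by omega, ?_, ?_⟩ <;>
      rw [hf.apply_apply _ hy] <;> omega
  have hfyfa : f (a + 1) < f a := by
    by_contra h'
    have : f (a + 1) ≠ f a := fun h'' => by
      have := congrArg f h''
      rw [hf.apply_apply _ hy, hf.apply_apply _ (mem_range.2 ha)] at this
      omega
    exact hf.not_interleaved a (mem_range.2 ha) _ hy ⟨by omega, h, by omega⟩
  obtain ⟨x, hx, hxf, hfx⟩ := hf.exists_apply_eq_succ (mem_range.1 hy) hyfy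
  exact ⟨x, by omega, by omega, hfx⟩
termination_by f a - a

lemma exists_lt_apply_eq_succ {n : ℕ} (hf : IsNonCrossingMatching (range (2 * n)) f)
    (hn : 0 < n) : ∃ x < n, f x = x + 1 := by
  -- the `n + 1` points `0, …, n` cannot all be matched into the `n - 1` points beyond them
  obtain ⟨x, hx, hfx⟩ : ∃ x ≤ n, f x ≤ n := by
    by_contra! h
    obtain ⟨x, hx, y, hy, hxy, he⟩ := exists_ne_map_eq_of_card_lt_of_maps_to
      (s := range (n + 1)) (t := Ico (n + 1) (2 * n)) (f := f) (by simp; omega) fun x hx => by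
        have hx := mem_range.1 hx
        exact mem_Ico.2 ⟨h x (by omega), mem_range.1 (hf.apply_mem x (mem_range.2 (by omega)))⟩
    have hx := mem_range.1 hx
    have hy := mem_range.1 hy
    apply hxy
    rw [← hf.apply_apply x (mem_range.2 (by omega)), he, hf.apply_apply y (mem_range.2 (by omega))]
  have hxN : x ∈ range (2 * n) := mem_range.2 (by omega)
  rcases lt_or_gt_of_ne (hf.apply_ne x hxN).symm with h | h
  · obtain ⟨z, -, hz, hfz⟩ := hf.exists_apply_eq_succ (mem_range.1 hxN) h
    exact ⟨z, by omega, hfz⟩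
  · obtain ⟨z, -, hz, hfz⟩ := hf.exists_apply_eq_succ (mem_range.1 (hf.apply_mem x hxN))
      (by rwa [hf.apply_apply x hxN])
    exact ⟨z, by rw [hf.apply_apply x hxN] at hz; omega, hfz⟩

lemma segment_inter_eq_empty (hf : IsNonCrossingMatching (range N) f) {q : ℕ → Pt}
    (hq : IsCCWChain N q) {x y : ℕ} (hx : x < N) (hy : y < N) (hyx : y ≠ x) (hyfx : y ≠ f x) :
    segment ℝ (q x) (q (f x)) ∩ segment ℝ (q y) (q (f y)) = ∅ := by
  have hf₁ := fun z (hz : z < N) => mem_range.1 (hf.apply_mem z (mem_range.2 hz))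
  have hf₂ := fun z (hz : z < N) => hf.apply_apply z (mem_range.2 hz)
  have hf₃ := fun z (hz : z < N) => hf.apply_ne z (mem_range.2 hz)
  wlog hxfx : x < f x generalizing x
  · have := this (hf₁ x hx) hyfx (by rwa [hf₂ x hx])
      (by have := hf₃ x hx; rw [hf₂ x hx]; omega)
    rwa [hf₂ x hx, segment_symm] at this
  wlog hyfy : y < f y generalizing y
  · have := this (hf₁ y hy) (fun h => hyfx (by rw [← h, hf₂ y hy]))
      (fun h => hyx (by rw [← hf₂ y hy, h, hf₂ x hx])) (by have := hf₃ y hy; rw [hf₂ y hy]; omega)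
    rwa [hf₂ y hy, segment_symm ℝ (q (f y))] at this
  wlog hxy : x < y generalizing x y
  · rw [Set.inter_comm]
    exact this hy hyfy hx hyx.symm (fun h => hyfx (by rw [h, hf₂ y hy])) hxfx (by omega)
  apply segment_inter_segment_eq_empty_of_det2_mul_pos
  rcases lt_or_gt_of_ne hyfx with h | h
  · have hfyfx : f y < f x := by
      have : f y ≠ f x := fun h' => hyx (by rw [← hf₂ y hy, h', hf₂ x hx])
      have := hf.not_interleaved x (mem_range.2 hx) y (mem_range.2 hy)
      omega
    exact mul_pos_of_neg_of_neg (hq.det2_neg hxy h (hf₁ x hx))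
      (hq.det2_neg (hxy.trans hyfy) hfyfx (hf₁ x hx))
  · exact mul_pos (hq.det2_pos hxfx (hf₁ x hx) hy (Or.inr h))
      (hq.det2_pos hxfx (hf₁ x hx) (hf₁ y hy) (Or.inr (h.trans hyfy)))

end IsNonCrossingMatching

section Rotation

variable {N : ℕ} [NeZero N] {p : ZMod N → Pt}

lemma IsNCM.isNonCrossingMatching_rotate {σ : ZMod N → ZMod N} (hσ : IsNCM N p σ) {b : ZMod N}
    (hq : IsCCWChain N (fun x => p (b + x))) :
    IsNonCrossingMatching (range N) (fun x => (σ (b + x) - b).val) := by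
  obtain ⟨hinv, hne, hdisj⟩ := hσ
  have hrot : ∀ z : ZMod N, b + ((z - b).val : ZMod N) = z := by simp
  refine ⟨fun x _ => mem_range.2 (ZMod.val_lt _), fun x hx => ?_, fun x hx h => ?_,
    fun x hx y hy ⟨hxy, hyfx, hfxfy⟩ => ?_⟩
  · simp only [hrot, hinv, val_add_natCast_sub b (mem_range.1 hx)]
  · exact hne (b + x) (by rw [← hrot (σ (b + x)), h])
  · have hcross := hq.segment_inter_nonempty hxy hyfx hfxfy (ZMod.val_lt _)
    simp only [hrot] at hcross
    rw [hdisj (b + x) (b + y) (fun h => hxy.ne' (add_natCast_injOn b (mem_range.1 hy)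
      (mem_range.1 hx) h)) (fun h => hyfx.ne (add_natCast_injOn b (mem_range.1 hy)
      (ZMod.val_lt _) (by rw [h, hrot])))] at hcross
    exact Set.not_nonempty_empty hcross

lemma IsNonCrossingMatching.isNCM_rotate {f : ℕ → ℕ} (hf : IsNonCrossingMatching (range N) f)
    {b : ZMod N} (hq : IsCCWChain N (fun x => p (b + x))) :
    IsNCM N p (fun z => b + f (z - b).val) := by
  have hf₁ := fun x (hx : x < N) => mem_range.1 (hf.apply_mem x (mem_range.2 hx))
  refine ⟨fun z => ?_, fun z h => ?_, fun i j hji hjσi => ?_⟩ <;> dsimp only at *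
  · obtain ⟨x, hx, rfl⟩ := exists_lt_add_natCast_eq b z
    rw [val_add_natCast_sub b hx, val_add_natCast_sub b (hf₁ x hx),
      hf.apply_apply x (mem_range.2 hx)]
  · obtain ⟨x, hx, rfl⟩ := exists_lt_add_natCast_eq b z
    rw [val_add_natCast_sub b hx] at h
    exact hf.apply_ne x (mem_range.2 hx) (add_natCast_injOn b (hf₁ x hx) hx h)
  · obtain ⟨x, hx, rfl⟩ := exists_lt_add_natCast_eq b i
    obtain ⟨y, hy, rfl⟩ := exists_lt_add_natCast_eq b j
    rw [val_add_natCast_sub b hx] at hjσi ⊢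
    rw [val_add_natCast_sub b hy]
    exact hf.segment_inter_eq_empty hq hx hy (fun h => hji (h ▸ rfl)) (fun h => hjσi (h ▸ rfl))

end Rotation

lemma Nat.exists_mem_Ico_of_count_ne {P : ℕ → Prop} [DecidablePred P] {x y : ℕ} (hxy : x ≤ y)
    (h : Nat.count P x ≠ Nat.count P y) : ∃ e, x ≤ e ∧ e < y ∧ P e := by
  induction y, hxy using Nat.le_induction with
  | base => exact absurd rfl h
  | succ y hxy ih =>
    by_cases hy : P y
    · exact ⟨y, hxy, y.lt_succ_self, hy⟩
    · obtain ⟨e, hxe, hey, he⟩ := ih (by simpa [Nat.count_succ, hy] using h)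
      exact ⟨e, hxe, hey.trans y.lt_succ_self, he⟩

lemma card_filter_count_eq_le {P : ℕ → Prop} [DecidablePred P] {n : ℕ}
    (hwin : ∀ u, ∃ k < n, P (u + k)) (S : Finset ℕ) (c : ℕ) :
    #{x ∈ S | Nat.count P x = c} ≤ n := by
  rcases ({x ∈ S | Nat.count P x = c}).eq_empty_or_nonempty with h | h
  · simp [h]
  -- a colour class lies within `n` of its least element
  obtain ⟨u, hu, humin⟩ : ∃ u ∈ {x ∈ S | Nat.count P x = c}, ∀ x ∈ {x ∈ S | Nat.count P x = c},
      u ≤ x := ⟨_, min'_mem _ h, fun x hx => min'_le _ x hx⟩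
  obtain ⟨k, hk, hPk⟩ := hwin u
  calc #{x ∈ S | Nat.count P x = c} ≤ #(Ico u (u + n)) := card_le_card fun x hx => by
        refine mem_Ico.2 ⟨humin x hx, ?_⟩
        by_contra! hux
        have := (Nat.count_monotone P (Nat.le_add_right u k)).trans_lt
          (Nat.count_strict_mono (n := x) hPk (by omega))
        rw [(mem_filter.1 hu).2, (mem_filter.1 hx).2] at this
        exact this.false
    _ = n := by simp

lemma not_forall_lt_dist_of_isNCM {n : ℕ} (hn : 0 < n) {p : ZMod (2 * n) → Pt}
    (hccw : OnCircleCCW (2 * n) p) {σ : ZMod (2 * n) → ZMod (2 * n)} (hσ : IsNCM (2 * n) p σ)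
    {μ : ℝ} (hlong : ∀ i, μ ≤ dist (p i) (p (σ i))) (j : ZMod (2 * n)) :
    ¬ ∀ k < n, dist (p (j + k)) (p (j + k + 1)) < μ := by
  have : NeZero (2 * n) := ⟨by omega⟩
  intro hshort
  obtain ⟨x, hx, hfx⟩ :=
    (hσ.isNonCrossingMatching_rotate (isCCWChain_rotate hccw.2.2 j)).exists_lt_apply_eq_succ hn
  have hσx : σ (j + x) = j + x + 1 := by
    have := congrArg (fun k : ℕ => j + (k : ZMod (2 * n))) hfx
    simpa [add_assoc] using this
  have := hlong (j + x)
  rw [hσx] at this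
  exact (hshort x hx).not_ge this

lemma exists_isNCM_of_forall_exists_le_dist {n : ℕ} (hn : 0 < n) {p : ZMod (2 * n) → Pt}
    (hccw : OnCircleCCW (2 * n) p) {μ : ℝ}
    (H : ∀ j : ZMod (2 * n), ∃ k < n, μ ≤ dist (p (j + k)) (p (j + k + 1))) :
    ∃ σ, IsNCM (2 * n) p σ ∧ ∀ i, μ ≤ dist (p i) (p (σ i)) := by
  classical
  have : NeZero (2 * n) := ⟨by omega⟩
  obtain ⟨⟨O, r, -, hO⟩, hinj, hp⟩ := hccw
  obtain ⟨k₀, -, hk₀⟩ := H 0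
  -- cut the circle after the long boundary edge `p k₀ p (k₀ + 1)`
  set b : ZMod (2 * n) := k₀ + 1
  set q : ℕ → Pt := fun x => p (b + x)
  have hq : IsCCWChain (2 * n) q := isCCWChain_rotate hp b
  set IsLong : ℕ → Prop := fun e => μ ≤ dist (q e) (q (e + 1))
  have hwin : ∀ u, ∃ k < n, IsLong (u + k) := fun u => by
    obtain ⟨k, hk, h⟩ := H (b + u)
    exact ⟨k, hk, by simpa [IsLong, q, add_assoc] using h⟩
  have hwrap : μ ≤ dist (q (2 * n - 1)) (q 0) := by
    simpa [q, b, Nat.cast_sub (by omega : 1 ≤ 2 * n)] using hk₀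
  have hchord : ∀ x y, x < y → y < 2 * n → Nat.count IsLong x ≠ Nat.count IsLong y →
      μ ≤ dist (q x) (q y) := fun x y hxy hy hc => by
    obtain ⟨e, hxe, hey, he⟩ := Nat.exists_mem_Ico_of_count_ne hxy.le hc
    exact hq.le_dist (fun _ => hO _) hxy hy
      (fun h => hxy.ne (add_natCast_injOn b (by omega) hy (hinj h))) hxe hey he hwrap
  obtain ⟨f, hf, hcol⟩ := exists_isNonCrossingMatching_of_card_filter_le (Nat.count IsLong) n
    (range (2 * n)) (by simp) (card_filter_count_eq_le hwin _)
  refine ⟨_, hf.isNCM_rotate hq, fun i => ?_⟩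
  obtain ⟨x, hx, rfl⟩ := exists_lt_add_natCast_eq b i
  rw [val_add_natCast_sub b hx]
  have hfx := mem_range.1 (hf.apply_mem x (mem_range.2 hx))
  rcases lt_or_gt_of_ne (hf.apply_ne x (mem_range.2 hx)).symm with h | h
  · exact hchord x (f x) h hfx (hcol x (mem_range.2 hx)).symm
  · rw [dist_comm]
    exact hchord (f x) x h hx (hcol x (mem_range.2 hx))

theorem matching_above_threshold_iff_general (n : ℕ) (hn : 0 < n) (p : ZMod (2 * n) → Pt)
    (hccw : OnCircleCCW (2 * n) p) (μ : ℝ) :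
    (∃ σ, IsNCM (2 * n) p σ ∧ ∀ i, μ ≤ dist (p i) (p (σ i))) ↔
      ¬ ∃ j : ZMod (2 * n), ∀ k : ℕ, k < n →
          dist (p (j + (k : ZMod (2 * n)))) (p (j + (k : ZMod (2 * n)) + 1)) < μ := by
  refine ⟨fun ⟨σ, hσ, hlong⟩ ⟨j, hshort⟩ => not_forall_lt_dist_of_isNCM hn hccw hσ hlong j hshort,
    fun h => exists_isNCM_of_forall_exists_le_dist hn hccw fun j => ?_⟩
  push Not at h
  exact h j

/-- For `2n` distinct points on a common circle in counterclockwise order and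
`μ > 0`, a perfect non-crossing matching with all edges of length at least `μ` exists iff there
are no `n` cyclically consecutive boundary edges all of length strictly less than `μ`. -/
theorem matching_above_threshold_iff (n : ℕ) (hn : 0 < n) (p : ZMod (2 * n) → Pt)
    (hccw : OnCircleCCW (2 * n) p) (μ : ℝ) (hμ : 0 < μ) :
    (∃ σ, IsNCM (2 * n) p σ ∧ ∀ i, μ ≤ dist (p i) (p (σ i))) ↔
      ¬ ∃ j : ZMod (2 * n), ∀ k : ℕ, k < n →
          dist (p (j + (k : ZMod (2 * n)))) (p (j + (k : ZMod (2 * n)) + 1)) < μ :=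
  matching_above_threshold_iff_general n hn p hccw μ
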